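/- Every theorem of B_K is valid on every frame under the reflexive-insensitive semantics (soundness of B_K with respect to the class of all frames). -/
import Mathlib


/-- Formulas of the language L∘. -/
inductive RIForm : Type where
  | var : Nat → RIForm
  | neg : RIForm → RIForm
  | and : RIForm → RIForm → RIForm
  | circ : RIForm → RIForm
deriving DecidableEq

def RIForm.imp (φ ψ : RIForm) : RIForm := .neg (.and φ (.neg ψ))
def RIForm.or (φ ψ : RIForm) : RIForm := .neg (.and (.neg φ) (.neg ψ))
def RIForm.top : RIForm := .neg (.and (.var 0) (.neg (.var 0)))
def RIForm.bot : RIForm := .and (.var 0) (.neg (.var 0))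
def RIForm.iff (φ ψ : RIForm) : RIForm := .and (φ.imp ψ) (ψ.imp φ)

/-- Reflexive-insensitive satisfaction. -/
def riSat {W : Type} (R : W → W → Prop) (V : Nat → W → Prop) : W → RIForm → Prop
  | w, .var p => V p w
  | w, .neg φ => ¬ riSat R V w φ
  | w, .and φ ψ => riSat R V w φ ∧ riSat R V w ψ
  | w, .circ φ => ¬ riSat R V w φ ∨ ∀ x, R w x → riSat R V x φ

/-- Validity on a frame under the reflexive-insensitive semantics. -/
def riValid {W : Type} (R : W → W → Prop) (φ : RIForm) : Prop :=
  ∀ V w, riSat R V w φ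

/-- Boolean evaluation treating variables and ∘-formulas as atoms. -/
def propEval (v : RIForm → Prop) : RIForm → Prop
  | .var p => v (.var p)
  | .neg φ => ¬ propEval v φ
  | .and φ ψ => propEval v φ ∧ propEval v ψ
  | .circ φ => v (.circ φ)

/-- Substitution instances of propositional tautologies. -/
def RITaut (φ : RIForm) : Prop := ∀ v, propEval v φ

/-- Uniform substitution. -/
def RIForm.subst (σ : Nat → RIForm) : RIForm → RIForm
  | .var p => σ p
  | .neg φ => .neg (φ.subst σ)
  | .and φ ψ => .and (φ.subst σ) (ψ.subst σ)
  | .circ φ => .circ (φ.subst σ)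

/-- The minimal RI-logic B_K. -/
inductive BK : RIForm → Prop
  | taut {φ} : RITaut φ → BK φ
  | b0 : BK (.circ RIForm.top)
  | b1 (φ : RIForm) : BK ((RIForm.neg (.circ φ)).imp φ)
  | b2 (φ ψ : RIForm) : BK ((RIForm.and (.circ φ) (.circ ψ)).imp (.circ (.and φ ψ)))
  | mp {φ ψ} : BK (φ.imp ψ) → BK φ → BK ψ
  | us {φ} (σ : Nat → RIForm) : BK φ → BK (φ.subst σ)
  | bN {φ ψ} : BK (φ.imp ψ) →
      BK ((RIForm.and (.circ φ) φ).imp (RIForm.and (.circ ψ) ψ))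


lemma riSat_propEval {W : Type} (R : W → W → Prop) (V : Nat → W → Prop) (w : W)
    (φ : RIForm) : riSat R V w φ ↔ propEval (riSat R V w) φ := by
  induction φ with
  | var p => rfl
  | neg φ ih => exact not_congr ih
  | and φ ψ ih1 ih2 => exact and_congr ih1 ih2
  | circ φ => rfl

lemma riSat_subst {W : Type} (R : W → W → Prop) (V : Nat → W → Prop)
    (σ : Nat → RIForm) (φ : RIForm) (w : W) :
    riSat R V w (φ.subst σ) ↔ riSat R (fun p x => riSat R V x (σ p)) w φ := by
  induction φ generalizing w with
  | var p => rfl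
  | neg φ ih => exact not_congr (ih w)
  | and φ ψ ih1 ih2 => exact and_congr (ih1 w) (ih2 w)
  | circ φ ih =>
      simp only [RIForm.subst, riSat]
      exact or_congr (not_congr (ih w)) (forall_congr' fun x => imp_congr Iff.rfl (ih x))

theorem BK_soundness (φ : RIForm) (h : BK φ) :
    ∀ (W : Type) (R : W → W → Prop), riValid R φ := by
  induction h with
  | @taut φ ht =>
      intro W R V w
      exact (riSat_propEval R V w φ).mpr (ht _)
  | b0 =>
      intro W R V w
      refine Or.inr fun x _ => ?_
      intro h; exact h.2 h.1
  | b1 φ =>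
      intro W R V w
      simp only [RIForm.imp, riSat]
      tauto
  | b2 φ ψ =>
      intro W R V w
      simp only [RIForm.imp, riSat]
      rintro ⟨⟨hφ, hψ⟩, hn⟩
      apply hn
      rcases hφ with h | h
      · exact Or.inl fun hc => h hc.1
      rcases hψ with h' | h'
      · exact Or.inl fun hc => h' hc.2
      · exact Or.inr fun x hx => ⟨h x hx, h' x hx⟩
  | mp h1 h2 ih1 ih2 =>
      intro W R V w
      have h1' := ih1 W R V w
      have h2' := ih2 W R V w
      simp only [RIForm.imp, riSat] at h1'
      tauto
  | us σ h ih =>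
      intro W R V w
      exact (riSat_subst R V σ _ w).mpr (ih W R _ w)
  | @bN φ ψ h ih =>
      intro W R V w
      have key : ∀ x, riSat R V x φ → riSat R V x ψ := by
        intro x hx
        have h' := ih W R V x
        simp only [RIForm.imp, riSat] at h'
        tauto
      simp only [RIForm.imp, riSat]
      rintro ⟨⟨hc, hφ⟩, hn⟩
      apply hn
      rcases hc with h' | h'
      · exact absurd hφ h'
      · exact ⟨Or.inr fun x hx => key x (h' x hx), key w hφ⟩
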